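/- arXiv:1702.02179 — 3 statements merged into one kernel-verified Lean document; each statement's English description precedes it below -/
import Mathlib

section
/- If h is exponentially distributed with rate K and P > 0, then E[log(1 + P·h)] = e^{K/P}·E_1(K/P), where E_1 is the exponential integral E_1(x) = ∫_1^∞ e^{-xt}/t dt. -/
open MeasureTheory Real

/-- The exponential integral `E₁(x) = ∫_1^∞ e^{-xt}/t dt`. -/
noncomputable def E1 (x : ℝ) : ℝ := ∫ t in Set.Ioi (1 : ℝ), Real.exp (-x * t) / t

/-!
Rescaling `x ↦ K x` turns the expectation into `∫_0^∞ e^{-x} log(1 + a x) dx` with `a = P/K`.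
Integrating by parts against `-e^{-x}` (the boundary terms vanish since `log(1 + a x) ≤ a x`)
gives `∫_0^∞ e^{-x} a/(1 + a x) dx`, and the substitution `t = 1 + a x` identifies this with
`e^{1/a} E₁(1/a)`.
-/

open Set Filter Topology

lemma integrableOn_one_add_mul_exp_neg :
    IntegrableOn (fun x : ℝ => (1 + x) * exp (-x)) (Ioi 0) := by
  have hGamma := GammaIntegral_convergent two_pos
  norm_num at hGamma
  refine ((exp_neg_integrableOn_Ioi 0 one_pos).add hGamma).congr_fun (fun x _ => ?_)
    measurableSet_Ioi
  simp only [Pi.add_apply, neg_one_mul]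
  ring

lemma tendsto_one_add_mul_exp_neg_atTop :
    Tendsto (fun x : ℝ => (1 + x) * exp (-x)) atTop (𝓝 0) := by
  have hexp := tendsto_exp_neg_atTop_nhds_zero
  have hpow := tendsto_pow_mul_exp_neg_atTop_nhds_zero 1
  simpa [add_mul] using hexp.add hpow

section

variable {f : ℝ → ℝ} {c : ℝ}

lemma integrableOn_exp_neg_mul_of_abs_le (hf : AEStronglyMeasurable f)
    (hbound : ∀ x > 0, |f x| ≤ c * (1 + x)) :
    IntegrableOn (fun x => exp (-x) * f x) (Ioi 0) := by
  refine (integrableOn_one_add_mul_exp_neg.const_mul c).mono'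
    ((by fun_prop : Measurable fun x => exp (-x)).aestronglyMeasurable.mul hf.restrict) ?_
  filter_upwards [self_mem_ae_restrict measurableSet_Ioi] with x hx
  rw [norm_mul, Real.norm_of_nonneg (exp_pos _).le, Real.norm_eq_abs]
  calc exp (-x) * |f x| ≤ exp (-x) * (c * (1 + x)) := by gcongr; exact hbound x hx
    _ = _ := by ring

lemma tendsto_exp_neg_mul_of_abs_le (hbound : ∀ x > 0, |f x| ≤ c * (1 + x)) :
    Tendsto (fun x => exp (-x) * f x) atTop (𝓝 0) := by
  refine squeeze_zero_norm' ?_ (by simpa using tendsto_one_add_mul_exp_neg_atTop.const_mul c)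
  filter_upwards [eventually_gt_atTop 0] with x hx
  rw [norm_mul, Real.norm_of_nonneg (exp_pos _).le, Real.norm_eq_abs]
  calc exp (-x) * |f x| ≤ exp (-x) * (c * (1 + x)) := by gcongr; exact hbound x hx
    _ = _ := by ring

end

lemma integral_exp_neg_mul_log_one_add_mul {a : ℝ} (ha : 0 < a) :
    ∫ x in Ioi 0, exp (-x) * log (1 + a * x) = ∫ x in Ioi 0, exp (-x) * (a / (1 + a * x)) := by
  have hpos : ∀ x : ℝ, 0 ≤ x → 0 < 1 + a * x := fun x hx => by positivity
  have hlog_le : ∀ x > 0, |log (1 + a * x)| ≤ a * (1 + x) := fun x hx => by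
    rw [abs_of_nonneg (log_nonneg (by nlinarith))]
    linarith [log_le_sub_one_of_pos (hpos x hx.le)]
  have hlog : IntegrableOn (fun x => exp (-x) * log (1 + a * x)) (Ioi 0) :=
    integrableOn_exp_neg_mul_of_abs_le
    (measurable_log.comp (by fun_prop)).aestronglyMeasurable hlog_le
  have hrat : IntegrableOn (fun x => exp (-x) * (a / (1 + a * x))) (Ioi 0) := by
    refine integrableOn_exp_neg_mul_of_abs_le (c := a)
      (by fun_prop : Measurable fun x => a / (1 + a * x)).aestronglyMeasurable fun x hx => ?_
    rw [abs_of_nonneg (div_nonneg ha.le (hpos x hx.le).le), div_le_iff₀ (hpos x hx.le)]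
    nlinarith [mul_pos ha hx]
  have hderiv : ∀ x ∈ Ici (0 : ℝ), HasDerivAt (fun x => -(exp (-x) * log (1 + a * x)))
      (exp (-x) * log (1 + a * x) - exp (-x) * (a / (1 + a * x))) x := fun x hx => by
    have hlog' := (((hasDerivAt_id' x).const_mul a).const_add 1).log (hpos x hx).ne'
    exact ((hasDerivAt_neg' x).exp.fun_mul hlog').fun_neg.congr_deriv (by ring)
  have hlim := (tendsto_exp_neg_mul_of_abs_le hlog_le).neg
  rw [neg_zero] at hlim
  have := integral_Ioi_of_hasDerivAt_of_tendsto' hderiv (hlog.sub hrat) hlim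
  rw [integral_sub hlog hrat] at this
  simpa [sub_eq_zero] using this

lemma exp_mul_E1 (b : ℝ) : exp b * E1 b = ∫ s in Ioi 0, exp (-(b * s)) / (1 + s) := by
  have hshift := (measurePreserving_add_right volume (1 : ℝ)).setIntegral_preimage_emb
    (measurableEmbedding_addRight 1) (fun t => exp (-b * t) / t) (Ioi 1)
  simp only [preimage_add_const_Ioi, sub_self] at hshift
  rw [E1, ← hshift, ← integral_const_mul]
  refine setIntegral_congr_fun measurableSet_Ioi fun s _ => ?_
  rw [mul_div_assoc', ← exp_add, add_comm s 1]
  ring_nf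

lemma exp_inv_mul_E1_inv {a : ℝ} (ha : 0 < a) :
    exp a⁻¹ * E1 a⁻¹ = ∫ x in Ioi 0, exp (-x) * (a / (1 + a * x)) := by
  have hscale := integral_comp_mul_left_Ioi' (fun s => exp (-(a⁻¹ * s)) / (1 + s)) 0 ha
  rw [mul_zero] at hscale
  rw [exp_mul_E1, ← hscale, smul_eq_mul, ← integral_const_mul]
  refine setIntegral_congr_fun measurableSet_Ioi fun x _ => ?_
  rw [inv_mul_cancel_left₀ ha.ne']
  ring

lemma integral_exp_density_mul {K : ℝ} (hK : 0 < K) (f : ℝ → ℝ) :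
    ∫ x in Ioi 0, K * exp (-K * x) * f x = ∫ x in Ioi 0, exp (-x) * f (x / K) := by
  have hscale := integral_comp_mul_left_Ioi' (fun y => exp (-y) * f (y / K)) 0 hK
  rw [mul_zero] at hscale
  rw [← hscale, smul_eq_mul, ← integral_const_mul]
  refine setIntegral_congr_fun measurableSet_Ioi fun x _ => ?_
  rw [mul_div_cancel_left₀ x hK.ne', neg_mul]
  ring

/-- If `h` is exponentially distributed with rate `K` and `P > 0`, then
`E[log(1 + P·h)] = e^{K/P}·E₁(K/P)`; equivalently,
`∫_0^∞ e^{-x}·log(1 + (P/K)·x) dx = e^{K/P}·E₁(K/P)`. -/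
theorem stmt_1 (K P : ℝ) (hK : 0 < K) (hP : 0 < P) :
    (∫ x in Set.Ioi (0 : ℝ), K * Real.exp (-K * x) * Real.log (1 + P * x)
        = Real.exp (K / P) * E1 (K / P))
    ∧ (∫ x in Set.Ioi (0 : ℝ), Real.exp (-x) * Real.log (1 + (P / K) * x)
        = Real.exp (K / P) * E1 (K / P)) := by
  have hPK : 0 < P / K := div_pos hP hK
  have hstd : ∫ x in Ioi 0, exp (-x) * log (1 + P / K * x) = exp (K / P) * E1 (K / P) := by
    rw [integral_exp_neg_mul_log_one_add_mul hPK, ← exp_inv_mul_E1_inv hPK, inv_div]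
  refine ⟨?_, hstd⟩
  rw [integral_exp_density_mul hK, ← hstd]
  simp_rw [mul_div_assoc', div_mul_eq_mul_div]
end

section
/- For 0 < m < 1, the function k ↦ k/T(m,k), where T(m,k) = (1-m)·(1-(1-m)^k)/m, is strictly increasing in the positive integer k. -/
/-!
Writing `q = 1 - m`, the geometric sum `1 - q ^ k = m * ∑ i < k, q ^ i` turns the map into
`k / (q * ∑ i < k, q ^ i)`, the reciprocal of `q` times the average of the first `k` terms of the
strictly decreasing sequence `q ^ i`. Averages of a strictly decreasing sequence strictly
decrease, because each new term lies below all the earlier ones.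
-/

open Finset

section StrictAnti

variable {α : Type*} [Field α] [LinearOrder α] [IsStrictOrderedRing α] {f : ℕ → α}

theorem StrictAnti.card_mul_lt_sum_range (hf : StrictAnti f) {k : ℕ} (hk : 0 < k) :
    (k : α) * f k < ∑ i ∈ range k, f i := by
  simpa using sum_lt_sum_of_nonempty (nonempty_range_iff.mpr hk.ne')
    fun i hi ↦ hf (mem_range.mp hi)

theorem StrictAnti.sum_Ico_le_card_mul (hf : StrictAnti f) {k l : ℕ} (hkl : k ≤ l) :
    ∑ i ∈ Ico k l, f i ≤ ((l : α) - k) * f k := by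
  simpa [Nat.cast_sub hkl] using
    sum_le_card_nsmul (Ico k l) f (f k) fun i hi ↦ hf.antitone (mem_Ico.mp hi).1

theorem StrictAnti.mul_sum_range_lt_mul_sum_range (hf : StrictAnti f) {k l : ℕ}
    (hk : 0 < k) (hkl : k < l) :
    (k : α) * ∑ i ∈ range l, f i < l * ∑ i ∈ range k, f i := by
  have hlk : (0 : α) < l - k := sub_pos.mpr (Nat.cast_lt.mpr hkl)
  have hsplit := sum_range_add_sum_Ico f hkl.le
  have head := mul_lt_mul_of_pos_left (hf.card_mul_lt_sum_range hk (α := α)) hlk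
  have tail := mul_le_mul_of_nonneg_left (hf.sum_Ico_le_card_mul hkl.le) (Nat.cast_nonneg' k)
  rw [← hsplit]
  linarith

end StrictAnti

/-- For `0 < m < 1`, the map `k ↦ k/T(m,k) = m·k/((1-m)·(1-(1-m)^k))` is
strictly increasing over positive integers `k`. -/
theorem stmt_6 (m : ℝ) (hm0 : 0 < m) (hm1 : m < 1) :
    ∀ k l : ℕ, 0 < k → k < l →
      m * k / ((1 - m) * (1 - (1 - m) ^ k))
        < m * l / ((1 - m) * (1 - (1 - m) ^ l)) := by
  intro k l hk hkl
  have hq : 0 < 1 - m := by linarith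
  set S : ℕ → ℝ := fun n ↦ ∑ i ∈ range n, (1 - m) ^ i
  have hanti : StrictAnti ((1 - m) ^ ·) := pow_right_strictAnti₀ hq (by linarith)
  have hratio : ∀ n, m * n / ((1 - m) * (1 - (1 - m) ^ n)) = n / ((1 - m) * S n) := fun n ↦ by
    rw [← mul_neg_geom_sum, sub_sub_cancel, mul_left_comm, mul_div_mul_left _ _ hm0.ne']
  have hS : ∀ n, 0 < n → 0 < (1 - m) * S n := fun n hn ↦
    mul_pos hq (sum_pos (fun i _ ↦ by positivity) (nonempty_range_iff.mpr hn.ne'))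
  rw [hratio, hratio, div_lt_div_iff₀ (hS k hk) (hS l (hk.trans hkl))]
  linarith [mul_lt_mul_of_pos_left (hanti.mul_sum_range_lt_mul_sum_range hk hkl) hq]
end

section
/- Let h_1,...,h_K be i.i.d. Exp(1) random variables, P > 0, and φ_k ≥ m·k/(1-m) for all k, with 0 < m < 1. With U(z) = #{k : h_k ≥ z} and h_{π_1} ≥ ... ≥ h_{π_K} the decreasing rearrangement, E[max_k φ_k·log(1 + h_{π_k}·P)] ≥ K·max_{z≥0} (m/(1-m))·e^{-z}·log(1 + P·z). -/
/-!
Fix `z ≥ 0` and let `U = #{i | z < hᵢ}`. When `U ≥ 1` the `U`-th largest gain exceeds `z`, so the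
`U`-th term of the maximum is at least `φ_U log (1 + P z) ≥ (m / (1 - m)) U log (1 + P z)`, and the
bound is trivial when `U = 0`. Taking expectations, with `E U = K e^{-z}` by linearity, bounds the
expectation by `K (m / (1 - m)) e^{-z} log (1 + P z)` for every `z`. The expectation is a genuine
one: the `k`-th sorted gain is the `k`-th order statistic, a measurable function of the gains
whatever the sorting permutation, and the maximum is dominated by a multiple of `∑ hᵢ`.
-/

open MeasureTheory ProbabilityTheory Finset Real

namespace ProbabilityTheory

lemma measureReal_expMeasure_Ioi {r x : ℝ} (hr : 0 < r) (hx : 0 ≤ x) :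
    (expMeasure r).real (Set.Ioi x) = exp (-(r * x)) := by
  have := isProbabilityMeasure_expMeasure hr
  rw [← Set.compl_Iic, probReal_compl_eq_one_sub measurableSet_Iic, ← cdf_eq_real,
    cdf_expMeasure_eq hr, if_pos hx, sub_sub_cancel]

lemma ae_pos_expMeasure {r : ℝ} (hr : 0 < r) : ∀ᵐ x ∂expMeasure r, 0 < x := by
  have := isProbabilityMeasure_expMeasure hr
  have hIic : {x : ℝ | ¬ 0 < x} = Set.Iic 0 := by ext; simp
  rw [ae_iff, hIic, ← ofReal_cdf, cdf_expMeasure_eq hr]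
  simp

lemma integrable_id_expMeasure {r : ℝ} (hr : 0 < r) : Integrable id (expMeasure r) := by
  have hpdf : Measurable (gammaPDF 1 r) := (measurable_gammaPDFReal 1 r).ennreal_ofReal
  rw [expMeasure, gammaMeasure, integrable_withDensity_iff hpdf
    (.of_forall fun _ => ENNReal.ofReal_lt_top)]
  have hdens : (fun x => id x * (gammaPDF 1 r x).toReal) =
      (Set.Ioi 0).indicator fun x => x ^ (1 : ℝ) * exp (-r * x ^ (1 : ℝ)) * r := by
    ext x
    rcases le_or_gt x 0 with hx | hx
    · rw [Set.indicator_of_notMem (Set.notMem_Ioi.2 hx)]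
      rcases hx.lt_or_eq with hx | rfl
      · simp [gammaPDF_of_neg hx]
      · simp
    · simp [Set.indicator_of_mem (Set.mem_Ioi.2 hx), gammaPDF, gammaPDFReal, hx.le,
        ENNReal.toReal_ofReal, hr.le, (exp_pos _).le]
      ring
  rw [hdens, integrable_indicator_iff measurableSet_Ioi]
  exact (integrableOn_rpow_mul_exp_neg_mul_rpow (by norm_num) one_pos hr).mul_const r

variable {Ω : Type*} [MeasurableSpace Ω] {μ : Measure Ω} {X : Ω → ℝ} {r : ℝ}

lemma ae_pos_of_map_eq_expMeasure (hX : Measurable X) (hlaw : μ.map X = expMeasure r)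
    (hr : 0 < r) : ∀ᵐ ω ∂μ, 0 < X ω :=
  ae_of_ae_map hX.aemeasurable (by rw [hlaw]; exact ae_pos_expMeasure hr)

lemma integrable_of_map_eq_expMeasure (hX : Measurable X) (hlaw : μ.map X = expMeasure r)
    (hr : 0 < r) : Integrable X μ :=
  (integrable_map_measure aestronglyMeasurable_id hX.aemeasurable).1
    (by rw [hlaw]; exact integrable_id_expMeasure hr)

lemma measureReal_lt_of_map_eq_expMeasure (hX : Measurable X) (hlaw : μ.map X = expMeasure r)
    (hr : 0 < r) {z : ℝ} (hz : 0 ≤ z) : μ.real {ω | z < X ω} = exp (-(r * z)) := by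
  rw [← measureReal_expMeasure_Ioi hr hz, ← hlaw, map_measureReal_apply hX measurableSet_Ioi]
  rfl

end ProbabilityTheory

section Sorting

variable {K : ℕ} {α : Type*} [LinearOrder α] {g : Fin K → α} {σ : Equiv.Perm (Fin K)}

lemma exists_mem_le_of_antitone (hσ : Antitone (g ∘ σ)) {s : Finset (Fin K)} {k : Fin K}
    (hk : k.1 < #s) : ∃ i ∈ s, g i ≤ g (σ k) := by
  by_contra! hlt
  have hsub : s.map σ.symm.toEmbedding ⊆ Iio k := by
    intro j hj
    obtain ⟨i, hi, rfl⟩ := mem_map.1 hj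
    refine mem_Iio.2 (lt_of_not_ge fun hki => (hlt i hi).not_ge ?_)
    simpa using hσ hki
  have hcard := card_le_card hsub
  simp only [card_map, Fin.card_Iio] at hcard
  omega

lemma lt_apply_of_lt_card_filter (hσ : Antitone (g ∘ σ)) {z : α} {k : Fin K}
    (hk : k.1 < #{i | z < g i}) : z < g (σ k) := by
  obtain ⟨i, hi, hle⟩ := exists_mem_le_of_antitone hσ hk
  exact (mem_filter.1 hi).2.trans_le hle

end Sorting

/-- The `k`-th largest entry of `g`, counting from `0`, written without a sorting permutation so
that it is visibly measurable in `g`. -/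
noncomputable def kthLargest {K : ℕ} (g : Fin K → ℝ) (k : Fin K) : ℝ :=
  ⨆ s : {s : Finset (Fin K) // #s = k + 1}, ⨅ i : s.1, g i

lemma kthLargest_eq_of_antitone {K : ℕ} {g : Fin K → ℝ} {σ : Equiv.Perm (Fin K)}
    (hσ : Antitone (g ∘ σ)) (k : Fin K) : kthLargest g k = g (σ k) := by
  set top : Finset (Fin K) := (Iic k).map σ.toEmbedding
  have htop : #top = k + 1 := by simp [top]
  apply le_antisymm
  · have : Nonempty {s : Finset (Fin K) // #s = k + 1} := ⟨⟨top, htop⟩⟩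
    refine ciSup_le fun s => ?_
    obtain ⟨i, hi, hle⟩ := exists_mem_le_of_antitone hσ (s := s.1) (k := k) (by omega)
    exact (ciInf_le (Finite.bddBelow_range _) ⟨i, hi⟩).trans hle
  · refine le_trans ?_ (le_ciSup (Finite.bddAbove_range _) ⟨top, htop⟩)
    have : Nonempty top := ⟨⟨σ k, by simp [top]⟩⟩
    refine le_ciInf fun ⟨i, hi⟩ => ?_
    obtain ⟨j, hj, rfl⟩ := mem_map.1 hi
    exact hσ (mem_Iic.1 hj)

@[fun_prop]
lemma measurable_kthLargest {K : ℕ} (k : Fin K) :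
    Measurable fun g : Fin K → ℝ => kthLargest g k :=
  Measurable.iSup fun _ => Measurable.iInf fun i => measurable_pi_apply i.1

lemma measurable_apply_of_antitone {Ω : Type*} [MeasurableSpace Ω] {K : ℕ}
    {h : Fin K → Ω → ℝ} (hmeas : ∀ i, Measurable (h i)) {σ : Ω → Equiv.Perm (Fin K)}
    (hσ : ∀ ω, Antitone ((fun i => h i ω) ∘ σ ω)) (k : Fin K) :
    Measurable fun ω => h (σ ω k) ω := by
  simp_rw [← kthLargest_eq_of_antitone (hσ _)]
  fun_prop

lemma measurable_sup'_comp_of_antitone {Ω : Type*} [MeasurableSpace Ω] {K : ℕ}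
    (hne : (univ : Finset (Fin K)).Nonempty) {f : Fin K → ℝ → ℝ} (hf : ∀ k, Measurable (f k))
    {h : Fin K → Ω → ℝ} (hmeas : ∀ i, Measurable (h i)) {σ : Ω → Equiv.Perm (Fin K)}
    (hσ : ∀ ω, Antitone ((fun i => h i ω) ∘ σ ω)) :
    Measurable fun ω => univ.sup' hne fun k => f k (h (σ ω k) ω) := by
  convert Finset.measurable_sup' hne fun k _ =>
    (hf k).comp (measurable_apply_of_antitone hmeas hσ k)
  simp only [Finset.sup'_apply, Function.comp_apply]

section Counting

variable {Ω ι : Type*} [Fintype ι] {p : ι → Ω → Prop} [∀ i ω, Decidable (p i ω)]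

lemma card_filter_eq_sum_indicator (ω : Ω) :
    (#{i | p i ω} : ℝ) = ∑ i, {ω | p i ω}.indicator 1 ω := by
  simp [Set.indicator_apply, sum_boole]

variable [MeasurableSpace Ω] {μ : Measure Ω} [IsFiniteMeasure μ]

lemma integrable_card_filter (hp : ∀ i, MeasurableSet {ω | p i ω}) :
    Integrable (fun ω => (#{i | p i ω} : ℝ)) μ := by
  simp_rw [card_filter_eq_sum_indicator]
  exact integrable_finsetSum _ fun i _ => (integrable_const 1).indicator (hp i)

lemma integral_card_filter (hp : ∀ i, MeasurableSet {ω | p i ω}) :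
    ∫ ω, (#{i | p i ω} : ℝ) ∂μ = ∑ i, μ.real {ω | p i ω} := by
  simp_rw [card_filter_eq_sum_indicator]
  rw [integral_finsetSum _ fun i _ => (integrable_const 1).indicator (hp i)]
  exact sum_congr rfl fun i _ => integral_indicator_one (hp i)

end Counting

lemma mul_sSup_le_of_forall_mul_le {s : Set ℝ} {c b : ℝ} (hc : 0 < c) (hb : 0 ≤ b)
    (h : ∀ x ∈ s, c * x ≤ b) : c * sSup s ≤ b := by
  rw [← le_div_iff₀' hc]
  exact Real.sSup_le (fun x hx => (le_div_iff₀' hc).2 (h x hx)) (div_nonneg hb hc.le)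

lemma log_one_add_mul_nonneg {x P : ℝ} (hx : 0 ≤ x) (hP : 0 ≤ P) : 0 ≤ log (1 + x * P) :=
  log_nonneg (by nlinarith)

section Rate

variable {K : ℕ} (hne : (univ : Finset (Fin K)).Nonempty) {φ : ℕ → ℝ} {P : ℝ}

section Deterministic

variable {g : Fin K → ℝ} {σ : Equiv.Perm (Fin K)}

lemma sup'_mul_log_nonneg (hφ : ∀ n, 0 ≤ φ n) (hP : 0 ≤ P) (hg : ∀ i, 0 ≤ g i) :
    0 ≤ univ.sup' hne fun k : Fin K => φ (k.1 + 1) * log (1 + g (σ k) * P) := by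
  obtain ⟨k, hk⟩ := hne
  exact le_sup'_of_le _ hk (mul_nonneg (hφ _) (log_one_add_mul_nonneg (hg _) hP))

lemma abs_sup'_mul_log_le (hφ : ∀ n, 0 ≤ φ n) (hP : 0 ≤ P) (hg : ∀ i, 0 ≤ g i) :
    |univ.sup' hne fun k : Fin K => φ (k.1 + 1) * log (1 + g (σ k) * P)|
      ≤ (∑ k : Fin K, φ (k.1 + 1)) * (P * ∑ i, g i) := by
  rw [abs_of_nonneg (sup'_mul_log_nonneg hne hφ hP hg)]
  refine sup'_le _ _ fun k _ => mul_le_mul ?_ ?_ (log_one_add_mul_nonneg (hg _) hP) ?_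
  · exact single_le_sum (fun k _ => hφ (k.1 + 1)) (mem_univ k)
  · calc log (1 + g (σ k) * P) ≤ g (σ k) * P := by
          linarith [log_le_sub_one_of_pos (by nlinarith [hg (σ k)] : 0 < 1 + g (σ k) * P)]
      _ ≤ P * ∑ i, g i := by
        rw [mul_comm]
        exact mul_le_mul_of_nonneg_left (single_le_sum (fun i _ => hg i) (mem_univ _)) hP
  · exact sum_nonneg fun k _ => hφ _

lemma mul_card_filter_le_sup'_mul_log {a z : ℝ} (ha : 0 ≤ a) (hφ : ∀ n : ℕ, a * n ≤ φ n)
    (hP : 0 ≤ P) (hz : 0 ≤ z) (hg : ∀ i, 0 ≤ g i) (hσ : Antitone (g ∘ σ)) :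
    a * log (1 + P * z) * #{i | z < g i}
      ≤ univ.sup' hne fun k : Fin K => φ (k.1 + 1) * log (1 + g (σ k) * P) := by
  have hφnn (n : ℕ) : 0 ≤ φ n := (mul_nonneg ha n.cast_nonneg).trans (hφ n)
  obtain hn | hn := Nat.eq_zero_or_pos #{i | z < g i}
  · simpa [hn] using sup'_mul_log_nonneg hne hφnn hP hg
  have hnK : #{i | z < g i} - 1 < K := by
    have := card_le_univ ({i | z < g i} : Finset (Fin K))
    rw [Fintype.card_fin] at this
    omega
  set k : Fin K := ⟨#{i | z < g i} - 1, hnK⟩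
  have hk : k.1 + 1 = #{i | z < g i} := Nat.sub_add_cancel hn
  have hzk : z < g (σ k) := lt_apply_of_lt_card_filter hσ (by omega)
  have hlogz : 0 ≤ log (1 + P * z) := by rw [mul_comm]; exact log_one_add_mul_nonneg hz hP
  refine le_sup'_of_le _ (mem_univ k) ?_
  rw [hk, mul_right_comm]
  exact mul_le_mul (hφ _) (log_le_log (by positivity) (by nlinarith)) hlogz (hφnn _)

end Deterministic

lemma integrable_sup'_mul_log {Ω : Type*} [MeasurableSpace Ω] {μ : Measure Ω}
    (hφ : ∀ n, 0 ≤ φ n) (hP : 0 ≤ P) {h : Fin K → Ω → ℝ} (hmeas : ∀ i, Measurable (h i))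
    (hint : ∀ i, Integrable (h i) μ) (hpos : ∀ᵐ ω ∂μ, ∀ i, 0 ≤ h i ω)
    {σ : Ω → Equiv.Perm (Fin K)} (hσ : ∀ ω, Antitone ((fun i => h i ω) ∘ σ ω)) :
    Integrable (fun ω => univ.sup' hne fun k : Fin K => φ (k.1 + 1) * log (1 + h (σ ω k) ω * P))
      μ := by
  refine Integrable.mono' (g := fun ω => (∑ k : Fin K, φ (k.1 + 1)) * (P * ∑ i, h i ω))
    (((integrable_finsetSum _ fun i _ => hint i).const_mul P).const_mul _)
    (measurable_sup'_comp_of_antitone hne (f := fun k x => φ (k.1 + 1) * log (1 + x * P))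
      (fun k => by fun_prop) hmeas hσ).aestronglyMeasurable
    (hpos.mono fun ω hω => ?_)
  exact (Real.norm_eq_abs _).trans_le
    (abs_sup'_mul_log_le (g := fun i => h i ω) (σ := σ ω) _ hφ hP hω)

end Rate

theorem stmt_11_general {Ω : Type*} [MeasurableSpace Ω] (μ : Measure Ω)
    [IsProbabilityMeasure μ] (K : ℕ) (hK : 0 < K) (P m : ℝ) (hP : 0 < P)
    (hm0 : 0 < m) (hm1 : m < 1)
    (φ : ℕ → ℝ)
    (hφlb : ∀ n, m * n / (1 - m) ≤ φ n)
    (h : Fin K → Ω → ℝ) (hmeas : ∀ k, Measurable (h k))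
    (hlaw : ∀ k, Measure.map (h k) μ = expMeasure 1)
    (σ : Ω → Equiv.Perm (Fin K))
    (hsort : ∀ ω, ∀ i j : Fin K, i ≤ j → h (σ ω j) ω ≤ h (σ ω i) ω) :
    K * sSup ((fun z : ℝ => m / (1 - m) * Real.exp (-z) * Real.log (1 + P * z))
        '' Set.Ici 0)
      ≤ ∫ ω, (Finset.univ.sup'
          (Finset.univ_nonempty_iff.mpr (Fin.pos_iff_nonempty.mp hK))
          (fun k : Fin K => φ (k.1 + 1) * Real.log (1 + h (σ ω k) ω * P))) ∂μ := by
  set a := m / (1 - m)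
  have ha : 0 ≤ a := div_nonneg hm0.le (sub_pos.2 hm1).le
  have hφ (n : ℕ) : a * n ≤ φ n := by simpa only [a, mul_div_right_comm] using hφlb n
  have hφnn (n : ℕ) : 0 ≤ φ n := (mul_nonneg ha n.cast_nonneg).trans (hφ n)
  have hanti (ω : Ω) : Antitone ((fun i => h i ω) ∘ σ ω) := hsort ω
  have hpos : ∀ᵐ ω ∂μ, ∀ i, 0 ≤ h i ω := ae_all_iff.2 fun i =>
    (ae_pos_of_map_eq_expMeasure (hmeas i) (hlaw i) one_pos).mono fun _ => le_of_lt
  have hne : (univ : Finset (Fin K)).Nonempty := univ_nonempty_iff.mpr (Fin.pos_iff_nonempty.mp hK)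
  set F := fun ω => univ.sup' hne fun k : Fin K => φ (k.1 + 1) * log (1 + h (σ ω k) ω * P)
  have hFint : Integrable F μ := integrable_sup'_mul_log hne hφnn hP.le hmeas
    (fun i => integrable_of_map_eq_expMeasure (hmeas i) (hlaw i) one_pos) hpos hanti
  refine mul_sSup_le_of_forall_mul_le (Nat.cast_pos.2 hK) (integral_nonneg_of_ae ?_) ?_
  · exact hpos.mono fun ω hω =>
      sup'_mul_log_nonneg (g := fun i => h i ω) (σ := σ ω) _ hφnn hP.le hω
  rintro _ ⟨z, hz, rfl⟩
  have hmeasz (i : Fin K) : MeasurableSet {ω | z < h i ω} := hmeas i measurableSet_Ioi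
  have htail (i : Fin K) : μ.real {ω | z < h i ω} = exp (-z) := by
    rw [measureReal_lt_of_map_eq_expMeasure (hmeas i) (hlaw i) one_pos hz, one_mul]
  calc (K : ℝ) * (a * exp (-z) * log (1 + P * z))
      = ∫ ω, a * log (1 + P * z) * #{i | z < h i ω} ∂μ := by
        rw [integral_const_mul, integral_card_filter hmeasz]
        simp only [htail, sum_const, card_univ, Fintype.card_fin, nsmul_eq_mul]
        ring
    _ ≤ ∫ ω, F ω ∂μ := integral_mono_ae ((integrable_card_filter hmeasz).const_mul _) hFint
        (hpos.mono fun ω hω =>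
          mul_card_filter_le_sup'_mul_log (g := fun i => h i ω) _ ha hφ hP.le hz hω (hanti ω))

/-- Lower bound for the selection scheme: for i.i.d. `Exp(1)` gains
`h₁,...,h_K`, `P > 0`, `0 < m < 1` and weights `φ_k ≥ m·k/(1-m)`, with `σ ω`
a permutation sorting the gains decreasingly,
`E[max_k φ_k·log(1 + h_{σ_k}·P)] ≥ K·max_{z ≥ 0} (m/(1-m))·e^{-z}·log(1+P·z)`. -/
theorem stmt_11 {Ω : Type*} [MeasurableSpace Ω] (μ : Measure Ω)
    [IsProbabilityMeasure μ] (K : ℕ) (hK : 0 < K) (P m : ℝ) (hP : 0 < P)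
    (hm0 : 0 < m) (hm1 : m < 1)
    (φ : ℕ → ℝ) (hφ0 : φ 0 = 0) (hφnn : ∀ n, 0 ≤ φ n)
    (hφlb : ∀ n, m * n / (1 - m) ≤ φ n)
    (h : Fin K → Ω → ℝ) (hmeas : ∀ k, Measurable (h k))
    (hindep : iIndepFun h μ)
    (hlaw : ∀ k, Measure.map (h k) μ = expMeasure 1)
    (σ : Ω → Equiv.Perm (Fin K))
    (hsort : ∀ ω, ∀ i j : Fin K, i ≤ j → h (σ ω j) ω ≤ h (σ ω i) ω) :
    K * sSup ((fun z : ℝ => m / (1 - m) * Real.exp (-z) * Real.log (1 + P * z))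
        '' Set.Ici 0)
      ≤ ∫ ω, (Finset.univ.sup'
          (Finset.univ_nonempty_iff.mpr (Fin.pos_iff_nonempty.mp hK))
          (fun k : Fin K => φ (k.1 + 1) * Real.log (1 + h (σ ω k) ω * P))) ∂μ :=
  stmt_11_general μ K hK P m hP hm0 hm1 φ hφlb h hmeas hlaw σ hsort
end
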